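/- arXiv:0712.4341 — 3 statements merged into one kernel-verified Lean document; each statement's English description precedes it below -/
import Mathlib

section
/- For every l-valued finite automaton A = (Q, Σ, δ, I, F) there exists an l-valued deterministic finite automaton B = (Q', Σ, η, s₀, E) such that rec_A = rec_B, i.e. rec_A(ω) = rec_B(ω) for every ω ∈ Σ*. (Such a B is given explicitly by the quantum subset construction: Q' = 2^{Q × (l₁∖{0})} where l₁ is the finite meet-subsemilattice of l generated by Im(δ) ∪ Im(I) ∪ Im(F), s₀ = {(q, I(q)) : q ∈ Q, I(q) ≠ 0}, η(Z, σ) = {(p, r ∧ δ(q,σ,p)) : (q,r) ∈ Z, p ∈ Q, r ∧ δ(q,σ,p) ≠ 0}, and E(Z) = ⋁{ r ∧ F(q) : (q,r) ∈ Z }.) -/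
/-- A complete orthomodular lattice. -/
class OrthomodularCompleteLattice (α : Type*) extends CompleteLattice α, Compl α where
  inf_compl_self : ∀ a : α, a ⊓ aᶜ = ⊥
  sup_compl_self : ∀ a : α, a ⊔ aᶜ = ⊤
  compl_compl' : ∀ a : α, aᶜᶜ = a
  compl_antitone : ∀ a b : α, a ≤ b → bᶜ ≤ aᶜ
  orthomodular : ∀ a b : α, a ≤ b → b = a ⊔ (aᶜ ⊓ b)

/-- An `l`-valued finite automaton (`l`-VFA). -/
structure LVFA (Q A l : Type*) where
  δ : Q → A → Q → l
  init : Q → l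
  final : Q → l

/-- The `l`-valued language recognized by an `l`-VFA. -/
def lvfaLang {Q A l : Type*} [OrthomodularCompleteLattice l] (M : LVFA Q A l)
    (w : List A) : l :=
  ⨆ path : Fin (w.length + 1) → Q,
    M.init (path 0) ⊓
      (⨅ i : Fin w.length, M.δ (path i.castSucc) (w.get i) (path i.succ)) ⊓
      M.final (path (Fin.last w.length))

/-- An `l`-valued deterministic finite automaton (`l`-VDFA). -/
structure LVDFA (Q A l : Type*) where
  next : Q → A → Q
  start : Q
  final : Q → l

/-- The `l`-valued language recognized by an `l`-VDFA. -/
def lvdfaLang {Q A l : Type*} (M : LVDFA Q A l) (w : List A) : l :=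
  M.final (w.foldl M.next M.start)

/-- An `l`-valued finite automaton with ε-moves (`ε` is encoded as `none`). -/
structure LVFAe (Q A l : Type*) where
  δ : Q → Option A → Q → l
  init : Q → l
  final : Q → l

/-- The `l`-valued language recognized by an `l`-VFA with ε-moves. -/
def lvfaeLang {Q A l : Type*} [OrthomodularCompleteLattice l] (M : LVFAe Q A l)
    (w : List A) : l :=
  ⨆ n : ℕ, ⨆ τ : Fin n → Option A, ⨆ _ : (List.ofFn τ).reduceOption = w,
    ⨆ path : Fin (n + 1) → Q,
      M.init (path 0) ⊓
        (⨅ i : Fin n, M.δ (path i.castSucc) (τ i) (path i.succ)) ⊓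
        M.final (path (Fin.last n))

/-- An `l`-valued language is `l`-regular if it is recognized by some `l`-VFA. -/
def IsLRegular {A l : Type*} [OrthomodularCompleteLattice l] (f : List A → l) : Prop :=
  ∃ (Q : Type) (_ : Fintype Q) (M : LVFA Q A l), ∀ w, lvfaLang M w = f w

/-!
Run the subset construction on pairs `(state, weight)`: after reading `w`, the deterministic
automaton is in the set of pairs `(path end, meet of the weights along path)` over all paths
labelled by `w`, and its final weight is the join over these pairs, which is `lvfaLang` itself.
Keeping the individual path weights, instead of joining them per state, is what makes this work
without any distributivity of `l`. All weights occurring lie in the meet-closure of the finitely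
many initial and transition weights, so only finitely many sets of pairs are reachable.
-/

theorem Fin.iInf_succ {α : Type*} [CompleteLattice α] {n : ℕ} (f : Fin (n + 1) → α) :
    ⨅ i, f i = f 0 ⊓ ⨅ i : Fin n, f i.succ :=
  le_antisymm (le_inf (iInf_le _ _) (le_iInf fun _ => iInf_le _ _))
    (le_iInf fun i => Fin.cases inf_le_left (fun j => inf_le_right.trans (iInf_le _ j)) i)

namespace LVDFA

variable {Q Q' A l : Type*}

theorem lvdfaLang_eq_of_map (B : LVDFA Q A l) (B' : LVDFA Q' A l) (f : Q → Q')
    (hstart : f B.start = B'.start) (hnext : ∀ q a, f (B.next q a) = B'.next (f q) a)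
    (hfinal : ∀ q, B'.final (f q) = B.final q) : lvdfaLang B' = lvdfaLang B := by
  funext w
  rw [lvdfaLang, lvdfaLang, ← hstart, List.foldl_hom f fun q a => (hnext q a).symm, hfinal]

def restrict (B : LVDFA Q A l) (S : Set Q) (hstart : B.start ∈ S)
    (hnext : ∀ q ∈ S, ∀ a, B.next q a ∈ S) : LVDFA S A l where
  next q a := ⟨B.next q a, hnext q q.2 a⟩
  start := ⟨B.start, hstart⟩
  final q := B.final q

theorem lvdfaLang_restrict (B : LVDFA Q A l) (S : Set Q) (hstart : B.start ∈ S)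
    (hnext : ∀ q ∈ S, ∀ a, B.next q a ∈ S) :
    lvdfaLang (B.restrict S hstart hnext) = lvdfaLang B :=
  (lvdfaLang_eq_of_map _ B Subtype.val rfl (fun _ _ => rfl) fun _ => rfl).symm

def reindex (e : Q ≃ Q') (B : LVDFA Q A l) : LVDFA Q' A l where
  next q a := e (B.next (e.symm q) a)
  start := e B.start
  final q := B.final (e.symm q)

theorem lvdfaLang_reindex (e : Q ≃ Q') (B : LVDFA Q A l) : lvdfaLang (B.reindex e) = lvdfaLang B :=
  lvdfaLang_eq_of_map B _ e rfl (fun q a => by simp [reindex]) fun q => by simp [reindex]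

theorem exists_fin_lvdfaLang_eq_of_finite_invariant (B : LVDFA Q A l) (S : Set Q)
    (hS : S.Finite) (hstart : B.start ∈ S) (hnext : ∀ q ∈ S, ∀ a, B.next q a ∈ S) :
    ∃ (n : ℕ) (B' : LVDFA (Fin n) A l), lvdfaLang B' = lvdfaLang B := by
  have : Finite S := hS.to_subtype
  exact ⟨_, (B.restrict S hstart hnext).reindex (Finite.equivFin S), by
    rw [lvdfaLang_reindex, lvdfaLang_restrict]⟩

end LVDFA

namespace LVFA

variable {Q A l : Type*}

section CompleteLattice

variable [CompleteLattice l] (M : LVFA Q A l)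

def pathWeight (w : List A) (path : Fin (w.length + 1) → Q) : l :=
  ⨅ i : Fin w.length, M.δ (path i.castSucc) (w.get i) (path i.succ)

theorem pathWeight_cons (a : A) (w : List A) (q : Q) (path : Fin (w.length + 1) → Q) :
    M.pathWeight (a :: w) (Fin.cons q path) = M.δ q a (path 0) ⊓ M.pathWeight w path :=
  Fin.iInf_succ (n := w.length) _

def subsetConstruction : LVDFA (Set (Q × l)) A l where
  next Z a := ⋃ z ∈ Z, Set.range fun p => (p, z.2 ⊓ M.δ z.1 a p)
  start := Set.range fun q => (q, M.init q)
  final Z := ⨆ z ∈ Z, z.2 ⊓ M.final z.1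

@[simp]
theorem mem_subsetConstruction_next (Z : Set (Q × l)) (a : A) (x : Q × l) :
    x ∈ M.subsetConstruction.next Z a ↔ ∃ z ∈ Z, ∃ p, x = (p, z.2 ⊓ M.δ z.1 a p) := by
  simp [subsetConstruction, eq_comm]

theorem mem_foldl_subsetConstruction_next (w : List A) (Z : Set (Q × l)) (x : Q × l) :
    x ∈ w.foldl M.subsetConstruction.next Z ↔
      ∃ z ∈ Z, ∃ path : Fin (w.length + 1) → Q,
        path 0 = z.1 ∧ x = (path (Fin.last _), z.2 ⊓ M.pathWeight w path) := by
  induction w generalizing Z with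
  | nil =>
    constructor
    · intro hx
      exact ⟨x, hx, fun _ => x.1, rfl, by simp [pathWeight]⟩
    · rintro ⟨z, hz, path, h0, rfl⟩
      simpa [pathWeight, Fin.last, h0] using hz
  | cons a w ih =>
    simp only [List.foldl_cons, ih, mem_subsetConstruction_next]
    constructor
    · rintro ⟨_, ⟨z, hz, p, rfl⟩, path, rfl, rfl⟩
      exact ⟨z, hz, Fin.cons z.1 path, rfl, by simp [pathWeight_cons, inf_assoc]⟩
    · rintro ⟨z, hz, path, h0, rfl⟩
      obtain ⟨q, path, rfl⟩ : ∃ q path', path = Fin.cons q path' :=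
        ⟨_, _, (Fin.cons_self_tail path).symm⟩
      obtain rfl : q = z.1 := h0
      exact ⟨_, ⟨z, hz, path 0, rfl⟩, path, rfl, by simp [pathWeight_cons, inf_assoc]⟩

theorem foldl_subsetConstruction_start (w : List A) :
    w.foldl M.subsetConstruction.next M.subsetConstruction.start =
      Set.range fun path : Fin (w.length + 1) → Q =>
        (path (Fin.last _), M.init (path 0) ⊓ M.pathWeight w path) := by
  ext x
  rw [mem_foldl_subsetConstruction_next]
  simp [subsetConstruction, eq_comm]

def weights : Set l :=
  infClosure (Set.range M.init ∪ Set.range fun t : Q × A × Q => M.δ t.1 t.2.1 t.2.2)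

theorem finite_weights [Finite Q] [Finite A] : M.weights.Finite :=
  ((Set.finite_range _).union (Set.finite_range _)).infClosure

theorem subsetConstruction_start_subset : M.subsetConstruction.start ⊆ Set.univ ×ˢ M.weights := by
  rintro _ ⟨q, rfl⟩
  exact ⟨trivial, subset_infClosure (Or.inl ⟨q, rfl⟩)⟩

theorem subsetConstruction_next_subset {Z : Set (Q × l)} (hZ : Z ⊆ Set.univ ×ˢ M.weights)
    (a : A) : M.subsetConstruction.next Z a ⊆ Set.univ ×ˢ M.weights := by
  intro x hx
  obtain ⟨z, hz, p, rfl⟩ := (M.mem_subsetConstruction_next Z a x).1 hx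
  exact ⟨trivial, infClosed_infClosure (hZ hz).2 (subset_infClosure (Or.inr ⟨(z.1, a, p), rfl⟩))⟩

end CompleteLattice

theorem lvdfaLang_subsetConstruction [OrthomodularCompleteLattice l] (M : LVFA Q A l) :
    lvdfaLang M.subsetConstruction = lvfaLang M := by
  funext w
  rw [lvdfaLang, foldl_subsetConstruction_start]
  exact iSup_range

end LVFA

/-- Determinization: every `l`-VFA is equivalent to an `l`-VDFA. -/
theorem lvfa_determinization {l Q A : Type*} [OrthomodularCompleteLattice l]
    [Fintype Q] [Fintype A] (M : LVFA Q A l) :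
    ∃ (Q' : Type) (_ : Fintype Q') (B : LVDFA Q' A l),
      ∀ w : List A, lvfaLang M w = lvdfaLang B w := by
  obtain ⟨n, B, hB⟩ := M.subsetConstruction.exists_fin_lvdfaLang_eq_of_finite_invariant
    {Z | Z ⊆ Set.univ ×ˢ M.weights} (Set.finite_univ.prod M.finite_weights).finite_subsets
    M.subsetConstruction_start_subset fun _ hZ a => M.subsetConstruction_next_subset hZ a
  exact ⟨Fin n, inferInstance, B, fun w => by rw [hB, LVFA.lvdfaLang_subsetConstruction]⟩
end

section
/- For every l-valued finite automaton with ε-moves A, there exists an l-valued deterministic finite automaton B such that rec_A = rec_B. -/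
namespace LVFAe

variable {Q A : Type*}

def transitions {n : ℕ} (τ : Fin n → Option A) (path : Fin (n + 1) → Q) :
    Set (Q × Option A × Q) :=
  Set.range fun i => (path i.castSucc, τ i, path i.succ)

lemma transitions_zero (τ : Fin 0 → Option A) (path : Fin 1 → Q) :
    transitions τ path = ∅ :=
  Set.range_eq_empty _

lemma transitions_snoc {n : ℕ} (τ : Fin n → Option A) (path : Fin (n + 1) → Q)
    (c : Option A) (q : Q) :
    transitions (Fin.snoc τ c) (Fin.snoc path q : Fin (n + 2) → Q) =
      insert (path (Fin.last n), c, q) (transitions τ path) := by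
  have hsteps : (fun i : Fin (n + 1) =>
      ((Fin.snoc path q : Fin (n + 2) → Q) i.castSucc, (Fin.snoc τ c : Fin (n + 1) → Option A) i,
        (Fin.snoc path q : Fin (n + 2) → Q) i.succ)) =
      Fin.snoc (fun i => (path i.castSucc, τ i, path i.succ)) (path (Fin.last n), c, q) := by
    funext i
    induction i using Fin.lastCases with
    | last => simp
    | cast i => simp only [Fin.succ_castSucc, Fin.snoc_castSucc]
  rw [transitions, hsteps, Fin.range_snoc, transitions]

lemma reduceOption_ofFn_snoc {n : ℕ} (τ : Fin n → Option A) (c : Option A) :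
    (List.ofFn (Fin.snoc τ c : Fin (n + 1) → Option A)).reduceOption =
      (List.ofFn τ).reduceOption ++ c.toList := by
  rw [List.ofFn_succ', List.reduceOption_concat]
  simp only [Fin.snoc_castSucc, Fin.snoc_last]

inductive Reaches : Q → List A → Q → Set (Q × Option A × Q) → Prop
  | refl (q : Q) : Reaches q [] q ∅
  | snoc {q q' : Q} {w : List A} {U : Set (Q × Option A × Q)} (c : Option A) (q'' : Q) :
      Reaches q w q' U → Reaches q (w ++ c.toList) q'' (insert (q', c, q'') U)

namespace Reaches

variable {q q' q'' : Q} {w v : List A} {U V W : Set (Q × Option A × Q)}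

lemma append (hw : Reaches q w q' U) (hv : Reaches q' v q'' V) :
    Reaches q (w ++ v) q'' (U ∪ V) := by
  induction hv with
  | refl => simpa using hw
  | snoc c q'' _ ih => simpa [Set.union_insert] using ih.snoc c q''

lemma single (a : A) (q q' : Q) : Reaches q [a] q' {(q, some a, q')} := by
  simpa using (refl q).snoc (some a) q'

lemma exists_of_append_singleton {a : A} (h : Reaches q (w ++ [a]) q'' W) :
    ∃ q' U V, Reaches q w q' U ∧ Reaches q' [a] q'' V ∧ W = U ∪ V := by
  generalize hwa : w ++ [a] = wa at h
  induction h generalizing w with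
  | refl => simp at hwa
  | @snoc q' w' U c q'' h ih =>
    cases c with
    | none =>
      obtain ⟨p, U, V, hU, hV, rfl⟩ := ih (by simpa using hwa)
      exact ⟨p, U, insert (q', none, q'') V, hU, by simpa using hV.snoc none q'',
        Set.union_insert.symm⟩
    | some b =>
      obtain ⟨rfl, rfl⟩ : w' = w ∧ b = a := by simpa using hwa.symm
      exact ⟨q', U, _, h, single b q' q'', Set.union_singleton.symm⟩

lemma ofFn {n : ℕ} (τ : Fin n → Option A) (path : Fin (n + 1) → Q) :
    Reaches (path 0) (List.ofFn τ).reduceOption (path (Fin.last n)) (transitions τ path) := by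
  induction n with
  | zero => simpa [transitions_zero] using refl (path 0)
  | succ n ih =>
    obtain ⟨τ, c, rfl⟩ : ∃ τ' c, τ = Fin.snoc τ' c :=
      ⟨Fin.init τ, τ (Fin.last n), (Fin.snoc_init_self τ).symm⟩
    obtain ⟨path, q, rfl⟩ : ∃ path' q, path = Fin.snoc path' q :=
      ⟨Fin.init path, path (Fin.last _), (Fin.snoc_init_self path).symm⟩
    have h0 : (Fin.snoc path q : Fin (n + 2) → Q) 0 = path 0 := by simp
    rw [reduceOption_ofFn_snoc, transitions_snoc, Fin.snoc_last, h0]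
    exact (ih τ path).snoc c q

lemma exists_ofFn (h : Reaches q w q' U) :
    ∃ (n : ℕ) (τ : Fin n → Option A) (path : Fin (n + 1) → Q),
      (List.ofFn τ).reduceOption = w ∧ path 0 = q ∧ path (Fin.last n) = q' ∧
        transitions τ path = U := by
  induction h with
  | refl => exact ⟨0, Fin.elim0, fun _ => q, rfl, rfl, rfl, transitions_zero _ _⟩
  | snoc c q'' _ ih =>
    obtain ⟨n, τ, path, rfl, rfl, rfl, rfl⟩ := ih
    exact ⟨n + 1, Fin.snoc τ c, Fin.snoc path q'', reduceOption_ofFn_snoc τ c, by simp,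
      by simp, transitions_snoc τ path c q''⟩

end Reaches

variable {l : Type*}

def runWeight [CompleteLattice l] (M : LVFAe Q A l) (q : Q) (U : Set (Q × Option A × Q))
    (q' : Q) : l :=
  M.init q ⊓ (⨅ t ∈ U, M.δ t.1 t.2.1 t.2.2) ⊓ M.final q'

lemma lvfaeLang_eq_iSup_reaches [OrthomodularCompleteLattice l] (M : LVFAe Q A l)
    (w : List A) :
    lvfaeLang M w = ⨆ (q) (q') (U) (_ : Reaches q w q' U), M.runWeight q U q' := by
  apply le_antisymm
  · refine iSup_le fun n => iSup_le fun τ => iSup_le fun hw => iSup_le fun path => ?_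
    refine le_iSup₂_of_le (path 0) (path (Fin.last n)) <|
      le_iSup₂_of_le (transitions τ path) (hw ▸ Reaches.ofFn τ path) (le_of_eq ?_)
    rw [runWeight, transitions, iInf_range]
  · refine iSup₂_le fun q q' => iSup₂_le fun U hU => ?_
    obtain ⟨n, τ, path, hw, rfl, rfl, rfl⟩ := hU.exists_ofFn
    refine le_iSup_of_le n <| le_iSup_of_le τ <| le_iSup_of_le hw <| le_iSup_of_le path ?_
    rw [runWeight, transitions, iInf_range]

def toLVDFA [CompleteLattice l] (M : LVFAe Q A l) :
    LVDFA (Q → Q → Set (Set (Q × Option A × Q))) A l where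
  next S a q q'' := {W | ∃ q' U V, U ∈ S q q' ∧ Reaches q' [a] q'' V ∧ W = U ∪ V}
  start q q' := {U | Reaches q [] q' U}
  final S := ⨆ (q) (q') (U ∈ S q q'), M.runWeight q U q'

lemma foldl_toLVDFA [CompleteLattice l] (M : LVFAe Q A l) (w : List A) :
    w.foldl M.toLVDFA.next M.toLVDFA.start = fun q q' => {U | Reaches q w q' U} := by
  induction w using List.reverseRecOn with
  | nil => rfl
  | append_singleton w a ih =>
    rw [List.foldl_append, ih]
    funext q q''
    ext W
    exact ⟨fun ⟨q', U, V, hU, hV, hW⟩ => hW ▸ hU.append hV,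
      Reaches.exists_of_append_singleton⟩

lemma lvfaeLang_eq_lvdfaLang_toLVDFA [OrthomodularCompleteLattice l] (M : LVFAe Q A l)
    (w : List A) : lvfaeLang M w = lvdfaLang M.toLVDFA w := by
  rw [lvfaeLang_eq_iSup_reaches, lvdfaLang, foldl_toLVDFA]
  rfl

end LVFAe

def LVDFA.mapStates {S S' A l : Type*} (B : LVDFA S A l) (e : S ≃ S') : LVDFA S' A l where
  next s a := e (B.next (e.symm s) a)
  start := e B.start
  final := B.final ∘ e.symm

lemma lvdfaLang_mapStates {S S' A l : Type*} (B : LVDFA S A l) (e : S ≃ S') (w : List A) :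
    lvdfaLang (B.mapStates e) w = lvdfaLang B w := by
  simp only [lvdfaLang, LVDFA.mapStates]
  rw [List.foldl_hom e (g₁ := B.next) (fun s a => by simp)]
  simp

/-- Every `l`-VFA with ε-moves is equivalent to an `l`-VDFA. -/
theorem lvfae_to_lvdfa {l Q A : Type*} [OrthomodularCompleteLattice l]
    [Fintype Q] [Fintype A] (M : LVFAe Q A l) :
    ∃ (Q' : Type) (_ : Fintype Q') (B : LVDFA Q' A l),
      ∀ w : List A, lvfaeLang M w = lvdfaLang B w := by
  let e := Finite.equivFin (Q → Q → Set (Set (Q × Option A × Q)))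
  refine ⟨_, inferInstance, M.toLVDFA.mapStates e, fun w => ?_⟩
  rw [lvdfaLang_mapStates, LVFAe.lvfaeLang_eq_lvdfaLang_toLVDFA]
end

section
/- An l-valued language A : Σ* → l is l-regular if and only if there exist m ≥ 0, elements k₁,…,kₘ ∈ l∖{0}, and (classical) regular languages L₁,…,Lₘ ⊆ Σ* such that A = ⋁_{i=1}^m kᵢ·1_{Lᵢ}, where (k·1_L)(ω) = k if ω ∈ L and 0 otherwise. -/
/-!
Read an `l`-VFA deterministically: after a word `w` the state is the set of pairs `(q, v)` with
`v` the weight of some run on `w` ending in `q`. Runs must be kept apart rather than joined,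
since `⊓` need not distribute over `⊔`. Every run weight is a meet of automaton weights, and a
finite subset of a lattice has finitely many meets, so only finitely many states are reachable.
Hence the recognized language has finite range, and each of its level sets is regular by
Myhill–Nerode. Conversely, a product of DFAs with final weight `⨆ {kᵢ | component i accepts}`
recognizes `⨆ᵢ kᵢ · 1_{Lᵢ}`, and a deterministic automaton is a special `l`-VFA.
-/

theorem iInf_fin_succ {α : Type*} [CompleteLattice α] {n : ℕ} (g : Fin (n + 1) → α) :
    ⨅ i, g i = g 0 ⊓ ⨅ i : Fin n, g i.succ := by
  rw [← (finSuccEquiv n).symm.iInf_comp, iInf_option]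
  simp

theorem exists_eq_iSup_of_finite_range {X α : Type*} [CompleteLattice α] {f : X → α}
    (hf : (Set.range f).Finite) :
    ∃ (m : ℕ) (k : Fin m → α), (∀ i, k i ≠ ⊥) ∧ ∀ x, f x = ⨆ i, ⨆ _ : f x = k i, k i := by
  classical
  set V := hf.toFinset.erase ⊥
  refine ⟨V.card, fun i => V.equivFin.symm i,
    fun i => (Finset.mem_erase.1 (V.equivFin.symm i).2).1, fun x => ?_⟩
  refine le_antisymm ?_ (iSup₂_le fun i h => h.ge)
  by_cases hx : f x = ⊥
  · exact hx ▸ bot_le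
  · have hxV : f x ∈ V := Finset.mem_erase.2 ⟨hx, hf.mem_toFinset.2 ⟨x, rfl⟩⟩
    exact le_iSup₂_of_le (V.equivFin ⟨f x, hxV⟩) (by simp) (by simp)

namespace LVDFA

variable {σ A l : Type*}

def eval (N : LVDFA σ A l) (w : List A) : σ :=
  w.foldl N.next N.start

theorem isRegular_setOf_lvdfaLang_eq (N : LVDFA σ A l) (hN : (Set.range N.eval).Finite) (v : l) :
    Language.IsRegular {w : List A | lvdfaLang N w = v} := by
  apply Language.IsRegular.of_finite_range_leftQuotient
  refine (hN.image fun s => ({y | N.final (y.foldl N.next s) = v} : Language A)).subset ?_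
  rintro _ ⟨x, rfl⟩
  refine ⟨N.eval x, ⟨x, rfl⟩, ?_⟩
  ext y
  change N.final (y.foldl N.next (N.eval x)) = v ↔ lvdfaLang N (x ++ y) = v
  rw [lvdfaLang, List.foldl_append, eval]

theorem exists_eq_iSup_of_finite_range_eval [CompleteLattice l] (N : LVDFA σ A l)
    (hN : (Set.range N.eval).Finite) :
    ∃ (m : ℕ) (k : Fin m → l) (L : Fin m → Language A),
      (∀ i, k i ≠ ⊥) ∧ (∀ i, (L i).IsRegular) ∧
      ∀ w, lvdfaLang N w = ⨆ i, ⨆ _ : w ∈ L i, k i := by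
  have hrange : (Set.range (lvdfaLang N)).Finite := by
    rw [show lvdfaLang N = N.final ∘ N.eval from rfl, Set.range_comp]
    exact hN.image _
  obtain ⟨m, k, hk, hf⟩ := exists_eq_iSup_of_finite_range hrange
  exact ⟨m, k, fun i => {w | lvdfaLang N w = k i}, hk,
    fun i => N.isRegular_setOf_lvdfaLang_eq hN _, hf⟩

section Pi

variable {ι : Type*} {σ : ι → Type*} [CompleteLattice l] (D : ∀ i, DFA A (σ i)) (k : ι → l)

def pi : LVDFA (∀ i, σ i) A l where
  next s a i := (D i).step (s i) a
  start i := (D i).start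
  final s := ⨆ i, ⨆ _ : s i ∈ (D i).accept, k i

theorem foldl_pi_next (w : List A) (s : ∀ i, σ i) (i : ι) :
    w.foldl (pi D k).next s i = (D i).evalFrom (s i) w := by
  induction w generalizing s with
  | nil => rfl
  | cons a w ih => exact ih _

theorem lvdfaLang_pi (w : List A) :
    lvdfaLang (pi D k) w = ⨆ i, ⨆ _ : w ∈ (D i).accepts, k i := by
  change (⨆ i, ⨆ _ : w.foldl (pi D k).next (pi D k).start i ∈ (D i).accept, k i) = _
  simp only [foldl_pi_next]
  rfl

end Pi

end LVDFA

namespace LVFA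

section CompleteLattice

variable {Q A l : Type*} [CompleteLattice l] (M : LVFA Q A l)

def weight (w : List A) (p : Fin (w.length + 1) → Q) : l :=
  ⨅ i : Fin w.length, M.δ (p i.castSucc) (w.get i) (p i.succ)

theorem weight_nil (p : Fin 1 → Q) : M.weight [] p = ⊤ := by
  simp [weight]

theorem weight_cons (a : A) (w : List A) (p : Fin (w.length + 2) → Q) :
    M.weight (a :: w) p = M.δ (p 0) a (p 1) ⊓ M.weight w (Fin.tail p) :=
  iInf_fin_succ _

def step (s : Set (Q × l)) (a : A) : Set (Q × l) :=
  {r | ∃ r₀ ∈ s, r.2 = r₀.2 ⊓ M.δ r₀.1 a r.1}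

theorem mem_foldl_step {w : List A} {s : Set (Q × l)} {r : Q × l} :
    r ∈ w.foldl M.step s ↔
      ∃ (v : l) (p : Fin (w.length + 1) → Q),
        (p 0, v) ∈ s ∧ r = (p (Fin.last _), v ⊓ M.weight w p) := by
  induction w generalizing s with
  | nil =>
    refine ⟨fun hr => ⟨r.2, fun _ => r.1, hr, by simp [weight_nil]⟩, ?_⟩
    rintro ⟨v, p, hp, rfl⟩
    simpa [weight_nil] using hp
  | cons a w ih =>
    rw [List.foldl_cons, ih]
    constructor
    · rintro ⟨v, p, ⟨r₀, hr₀, hv : v = r₀.2 ⊓ M.δ r₀.1 a (p 0)⟩, rfl⟩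
      subst hv
      exact ⟨r₀.2, Fin.cons r₀.1 p, hr₀, by simp [weight_cons, inf_assoc]⟩
    · rintro ⟨v, p, hp, rfl⟩
      exact ⟨v ⊓ M.δ (p 0) a (p 1), Fin.tail p, ⟨_, hp, rfl⟩,
        by simp [weight_cons, inf_assoc, Fin.tail]⟩

def determinize : LVDFA (Set (Q × l)) A l where
  next := M.step
  start := {r | r.2 = M.init r.1}
  final s := ⨆ r ∈ s, r.2 ⊓ M.final r.1

theorem foldl_step_start (w : List A) :
    w.foldl M.step {r | r.2 = M.init r.1} =
      Set.range fun p : Fin (w.length + 1) → Q =>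
        (p (Fin.last _), M.init (p 0) ⊓ M.weight w p) := by
  ext r
  simp [mem_foldl_step, eq_comm]

end CompleteLattice

theorem lvdfaLang_determinize {Q A l : Type*} [OrthomodularCompleteLattice l] (M : LVFA Q A l)
    (w : List A) : lvdfaLang M.determinize w = lvfaLang M w := by
  simp only [lvdfaLang, determinize, foldl_step_start, iSup_range]
  rfl

theorem finite_range_eval_determinize {Q A l : Type*} [CompleteLattice l] [Finite Q] [Finite A]
    (M : LVFA Q A l) : (Set.range M.determinize.eval).Finite := by
  set T := infClosure (Set.range M.init ∪ Set.range fun t : Q × A × Q => M.δ t.1 t.2.1 t.2.2)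
  have hT : T.Finite := ((Set.finite_range _).union (Set.finite_range _)).infClosure
  have hstep : ∀ s a, (∀ r ∈ s, r.2 ∈ T) → ∀ r ∈ M.step s a, r.2 ∈ T := by
    rintro s a hs r ⟨r₀, hr₀, hr⟩
    rw [hr]
    exact infClosed_infClosure (hs r₀ hr₀) (subset_infClosure (Or.inr ⟨(r₀.1, a, r.1), rfl⟩))
  have hfoldl : ∀ (w : List A) (s : Set (Q × l)),
      (∀ r ∈ s, r.2 ∈ T) → ∀ r ∈ w.foldl M.step s, r.2 ∈ T := by
    intro w
    induction w with
    | nil => exact fun s hs => hs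
    | cons a w ih => exact fun s hs => ih _ (hstep s a hs)
  refine (Set.finite_univ.prod hT).finite_subsets.subset ?_
  rintro _ ⟨w, rfl⟩ r hr
  refine ⟨trivial, hfoldl w _ ?_ r hr⟩
  rintro r (hr : r.2 = M.init r.1)
  exact hr ▸ subset_infClosure (Or.inl ⟨r.1, rfl⟩)

end LVFA

namespace LVDFA

variable {σ A l : Type*}

open scoped Classical in
noncomputable def toLVFA [CompleteLattice l] (N : LVDFA σ A l) : LVFA σ A l where
  δ q a q' := if q' = N.next q a then ⊤ else ⊥
  init q := if q = N.start then ⊤ else ⊥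
  final := N.final

theorem foldl_toLVFA_step [CompleteLattice l] (N : LVDFA σ A l) (w : List A) {q : σ}
    {s : Set (σ × l)} (hq : (q, ⊤) ∈ s) (hs : ∀ r ∈ s, r.2 = ⊥ ∨ r.1 = q) :
    (w.foldl N.next q, ⊤) ∈ w.foldl N.toLVFA.step s ∧
      ∀ r ∈ w.foldl N.toLVFA.step s, r.2 = ⊥ ∨ r.1 = w.foldl N.next q := by
  induction w generalizing q s with
  | nil => exact ⟨hq, hs⟩
  | cons a w ih =>
    refine ih ⟨(q, ⊤), hq, by simp [toLVFA]⟩ ?_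
    rintro r ⟨r₀, hr₀, hr⟩
    rcases hs r₀ hr₀ with h | h
    · exact Or.inl (by simp [hr, h])
    · by_cases hn : r.1 = N.next q a
      · exact Or.inr hn
      · exact Or.inl (by simp [hr, toLVFA, h, hn])

theorem lvfaLang_toLVFA [OrthomodularCompleteLattice l] (N : LVDFA σ A l) (w : List A) :
    lvfaLang N.toLVFA w = lvdfaLang N w := by
  rw [← LVFA.lvdfaLang_determinize]
  obtain ⟨hmem, hcon⟩ := N.foldl_toLVFA_step w (q := N.start)
    (s := N.toLVFA.determinize.start) (by simp [LVFA.determinize, toLVFA]) (by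
      rintro r (hr : r.2 = _)
      by_cases h : r.1 = N.start
      · exact Or.inr h
      · exact Or.inl (by simp [hr, toLVFA, h]))
  refine le_antisymm (iSup₂_le fun r hr => ?_) (le_iSup₂_of_le _ hmem (by simp [toLVFA, lvdfaLang]))
  rcases hcon r hr with h | h
  · simp [h]
  · exact inf_le_right.trans (by simp [h, toLVFA, lvdfaLang])

end LVDFA

/-- An `l`-valued language is `l`-regular iff it is a finite join of scalar multiples of
characteristic functions of classical regular languages. -/
theorem lregular_iff_step {l A : Type*} [OrthomodularCompleteLattice l] [Fintype A]
    (f : List A → l) :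
    IsLRegular f ↔
      ∃ (m : ℕ) (k : Fin m → l) (L : Fin m → Language A),
        (∀ i, k i ≠ ⊥) ∧ (∀ i, (L i).IsRegular) ∧
        ∀ w : List A, f w = ⨆ i, ⨆ _ : w ∈ L i, k i := by
  constructor
  · rintro ⟨Q, _, M, hM⟩
    obtain ⟨m, k, L, hk, hL, hf⟩ :=
      M.determinize.exists_eq_iSup_of_finite_range_eval M.finite_range_eval_determinize
    exact ⟨m, k, L, hk, hL, fun w => by rw [← hM, ← M.lvdfaLang_determinize, hf]⟩
  · rintro ⟨m, k, L, -, hL, hf⟩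
    choose σ _ D hD using hL
    refine ⟨_, inferInstance, (LVDFA.pi D k).toLVFA, fun w => ?_⟩
    rw [LVDFA.lvfaLang_toLVFA, LVDFA.lvdfaLang_pi, hf]
    simp only [hD]
end
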